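/- In the Hurwitz class monoid H_G of a finite group G, every element has a central power: for any tuple v, the class of v^{ord(ev(v))} commutes with the class of every tuple w, where ord(ev(v)) is the order of the product of entries of v in G. -/

import Mathlib

/-!
Sliding a single entry `g` leftwards across a tuple `u` by elementary moves conjugates every
entry of `u` by `g`; sliding a whole tuple `w` across `u` therefore conjugates `u` by `ev w`.
The tuple `v ^ ord(ev v)` has evaluation `1`, so it slides across any `w` without changing it.
-/

/-- An elementary Hurwitz move on tuples of elements of `G`:
`(…, a, b, …) ↦ (…, b, b⁻¹ a b, …)`. -/
def HurwitzMove {G : Type*} [Group G] (v w : List G) : Prop :=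
  ∃ (x y : List G) (a b : G), v = x ++ a :: b :: y ∧ w = x ++ b :: (b⁻¹ * a * b) :: y

/-- Braid equivalence: same orbit under the Hurwitz action of the braid group. -/
def BraidEquiv {G : Type*} [Group G] (v w : List G) : Prop :=
  Relation.EqvGen HurwitzMove v w

section

variable {G : Type*} [Group G]

theorem HurwitzMove.cons (a : G) {u w : List G} (h : HurwitzMove u w) :
    HurwitzMove (a :: u) (a :: w) := by
  obtain ⟨x, y, b, c, rfl, rfl⟩ := h
  exact ⟨a :: x, y, b, c, rfl, rfl⟩

namespace BraidEquiv

protected theorem refl (u : List G) : BraidEquiv u u := Relation.EqvGen.refl u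

protected theorem symm {u w : List G} (h : BraidEquiv u w) : BraidEquiv w u :=
  Relation.EqvGen.symm _ _ h

protected theorem trans {u v w : List G} (h₁ : BraidEquiv u v) (h₂ : BraidEquiv v w) :
    BraidEquiv u w :=
  Relation.EqvGen.trans _ _ _ h₁ h₂

theorem of_hurwitzMove {u w : List G} (h : HurwitzMove u w) : BraidEquiv u w :=
  Relation.EqvGen.rel _ _ h

theorem cons (a : G) {u w : List G} (h : BraidEquiv u w) : BraidEquiv (a :: u) (a :: w) := by
  induction h with
  | rel x y hxy => exact of_hurwitzMove (hxy.cons a)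
  | refl x => exact BraidEquiv.refl _
  | symm x y _ ih => exact ih.symm
  | trans x y z _ _ ih₁ ih₂ => exact ih₁.trans ih₂

theorem append_cons (u : List G) (g : G) (y : List G) :
    BraidEquiv (u ++ g :: y) (g :: (u.map fun a => g⁻¹ * a * g) ++ y) := by
  induction u with
  | nil => exact BraidEquiv.refl _
  | cons a u ih =>
    exact (ih.cons a).trans (of_hurwitzMove ⟨[], _, a, g, rfl, rfl⟩)

theorem append (u w : List G) :
    BraidEquiv (u ++ w) (w ++ u.map fun a => w.prod⁻¹ * a * w.prod) := by
  induction w generalizing u with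
  | nil => simpa using BraidEquiv.refl u
  | cons g w ih =>
    have hconj : ((u.map fun a => g⁻¹ * a * g).map fun a => w.prod⁻¹ * a * w.prod)
        = u.map fun a => (g :: w).prod⁻¹ * a * (g :: w).prod := by
      simp [mul_assoc]
    simpa [hconj] using (append_cons u g w).trans ((ih _).cons g)

theorem append_comm_of_prod_eq_one {v : List G} (hv : v.prod = 1) (w : List G) :
    BraidEquiv (v ++ w) (w ++ v) := by
  simpa [hv] using (append w v).symm

end BraidEquiv

theorem prod_flatten_replicate_orderOf (v : List G) :
    (List.replicate (orderOf v.prod) v).flatten.prod = 1 := by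
  rw [List.prod_flatten, List.map_replicate, List.prod_replicate, pow_orderOf_eq_one]

end

theorem hurwitz_central_power_general {G : Type*} [Group G] (v w : List G) :
    BraidEquiv ((List.replicate (orderOf v.prod) v).flatten ++ w)
      (w ++ (List.replicate (orderOf v.prod) v).flatten) :=
  BraidEquiv.append_comm_of_prod_eq_one (prod_flatten_replicate_orderOf v) w

/-- In the Hurwitz class monoid of a finite group `G`, every element has a central power:
the class of `v^{ord(ev v)}` commutes with the class of every tuple `w`. -/
theorem hurwitz_central_power {G : Type*} [Group G] [Fintype G] (v w : List G) :
    BraidEquiv ((List.replicate (orderOf v.prod) v).flatten ++ w)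
      (w ++ (List.replicate (orderOf v.prod) v).flatten) :=
  hurwitz_central_power_general v w
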